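/- Let I be a nonempty finite index set, let y : I → ℝ take values in {-1, 1}, and let v : I → ℝ be such that for every i with y(i)·v(i) > 0 one has |v(i)| ≥ 1. Then the minimum of Σ_{i ∈ I} ξ(i) over all slack vectors ξ : I → ℝ satisfying ξ(i) ≥ 0 and y(i)·v(i) ≥ 1 − ξ(i) for all i, equals Σ_{i ∈ I, y(i)·v(i) ≤ 0} |y(i) − v(i)|; moreover this minimum is attained at ξ(i) = max(1 − y(i)·v(i), 0). -/
import Mathlib

lemma svm_aux (I : Type*) [Fintype I]
    (y v : I → ℝ)
    (hy : ∀ i, y i = -1 ∨ y i = 1)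
    (hv : ∀ i, 0 < y i * v i → 1 ≤ |v i|) :
    (∑ i, max (1 - y i * v i) 0
      = ∑ i ∈ Finset.univ.filter (fun i => y i * v i ≤ 0), |y i - v i|) := by
  rw [← Finset.sum_filter_add_sum_filter_not Finset.univ (fun i => y i * v i ≤ 0)
        (fun i => max (1 - y i * v i) 0)]
  have h1 : ∀ i ∈ Finset.univ.filter (fun i => y i * v i ≤ 0),
      max (1 - y i * v i) 0 = |y i - v i| := by
    intro i hi
    simp only [Finset.mem_filter] at hi
    have hle := hi.2
    rcases hy i with h | h
    · have hv0 : 0 ≤ v i := by nlinarith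
      rw [h]; rw [h] at hle
      rw [max_eq_left (by nlinarith)]
      rw [abs_of_nonpos (by nlinarith)]
      ring
    · have hv0 : v i ≤ 0 := by nlinarith
      rw [h]; rw [h] at hle
      rw [max_eq_left (by nlinarith)]
      rw [abs_of_nonneg (by nlinarith)]
      ring
  have h2 : ∀ i ∈ Finset.univ.filter (fun i => ¬ y i * v i ≤ 0),
      max (1 - y i * v i) 0 = 0 := by
    intro i hi
    simp only [Finset.mem_filter, not_le] at hi
    have h1' := hv i hi.2
    have : 1 ≤ y i * v i := by
      rcases hy i with h | h <;> rw [h] at hi ⊢ <;>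
        [skip; skip] <;> cases abs_cases (v i) <;> nlinarith [hi.2]
    rw [max_eq_right (by linarith)]
  rw [Finset.sum_congr rfl h1, Finset.sum_congr rfl h2]
  simp

/-- In the SVM slack minimization, for labels y(i) ∈ {-1,1} and classifier
values v(i) with |v(i)| ≥ 1 on correctly classified points, the minimum of Σ ξ(i) over
feasible slacks equals Σ_{y(i)·v(i) ≤ 0} |y(i) − v(i)|, attained at ξ(i) = max(1 − y(i)·v(i), 0). -/
theorem svm_slack_minimum (I : Type*) [Fintype I] [Nonempty I]
    (y v : I → ℝ)
    (hy : ∀ i, y i = -1 ∨ y i = 1)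
    (hv : ∀ i, 0 < y i * v i → 1 ≤ |v i|) :
    IsLeast {s : ℝ | ∃ ξ : I → ℝ, (∀ i, 0 ≤ ξ i) ∧ (∀ i, 1 - ξ i ≤ y i * v i) ∧ s = ∑ i, ξ i}
      (∑ i ∈ Finset.univ.filter (fun i => y i * v i ≤ 0), |y i - v i|) ∧
    (∀ i, 0 ≤ max (1 - y i * v i) 0) ∧
    (∀ i, 1 - max (1 - y i * v i) 0 ≤ y i * v i) ∧
    (∑ i, max (1 - y i * v i) 0
      = ∑ i ∈ Finset.univ.filter (fun i => y i * v i ≤ 0), |y i - v i|) := by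
  have key := svm_aux I y v hy hv
  refine ⟨⟨⟨fun i => max (1 - y i * v i) 0, fun i => le_max_right _ _,
      fun i => by have := le_max_left (1 - y i * v i) 0; linarith, key.symm⟩, ?_⟩,
    fun i => le_max_right _ _,
    fun i => by have := le_max_left (1 - y i * v i) 0; linarith, key⟩
  rintro s ⟨ξ, hξ0, hξ1, rfl⟩
  rw [← key]
  apply Finset.sum_le_sum
  intro i _
  exact max_le (by linarith [hξ1 i]) (hξ0 i)
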